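/- arXiv:0706.4134 — 4 statements merged into one kernel-verified Lean document; each statement's English description precedes it below -/
import Mathlib

section
/- Let n ≥ 1, k ≥ 0 be integers and let W = {w_0 = 0, w_1, …, w_{n+k}} ⊂ ℤ^n be n+k+1 integer vectors with w_0 = 0, such that W spans ℤ^n mod 2. Let β_1, …, β_k ∈ ℤ^{n+k} be a ℤ-basis of the lattice of linear relations {β = (b_1,…,b_{n+k}) ∈ ℤ^{n+k} : ∑_{i=1}^{n+k} b_i·w_i = 0}, and let Φ_W : (ℝ∖{0})^n → (ℝ∖{0})^{n+k} be the map Φ_W(x) = (x^{w_1}, …, x^{w_{n+k}}). Then the image of Φ_W equals the set {z ∈ (ℝ∖{0})^{n+k} : z^{β_1} = z^{β_2} = ⋯ = z^{β_k} = 1}, where z^β := ∏_{i=1}^{n+k} z_i^{b_i}. -/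
/-!
The relations `β_j` hold on the image because `Φ_W(x)^b = x^{∑ b_i w_i}`. Conversely, since `W`
spans `ℤ^n` mod 2, some `n` of the `w_i` form an integer matrix `M` of odd determinant `d`. Odd
powers are bijective on `ℝ`, so taking `d`-th roots of `z^{adj M}` solves `x^{w_i} = z_i` for these
`n` indices. For any other `i`, `d • w_i` is an integer combination of the chosen rows, which is
a relation; as `z` and `Φ_W(x)` both satisfy all relations and agree on the chosen coordinates,
their `i`-th coordinates have equal `d`-th powers, hence are equal.
-/

open Finset

section LaurentMonomial

variable {ι G₀ : Type*} [Fintype ι] [CommGroupWithZero G₀]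

def laurentMonomial (x : ι → G₀) (v : ι → ℤ) : G₀ := ∏ i, x i ^ v i

variable {x : ι → G₀}

lemma laurentMonomial_ne_zero (hx : ∀ i, x i ≠ 0) (v : ι → ℤ) : laurentMonomial x v ≠ 0 :=
  prod_ne_zero_iff.mpr fun i _ => zpow_ne_zero _ (hx i)

@[simp] lemma laurentMonomial_zero : laurentMonomial x 0 = 1 := by simp [laurentMonomial]

lemma laurentMonomial_add (hx : ∀ i, x i ≠ 0) (a b : ι → ℤ) :
    laurentMonomial x (a + b) = laurentMonomial x a * laurentMonomial x b := by
  simp only [laurentMonomial, ← prod_mul_distrib, Pi.add_apply, zpow_add₀ (hx _)]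

lemma laurentMonomial_sub (hx : ∀ i, x i ≠ 0) (a b : ι → ℤ) :
    laurentMonomial x (a - b) = laurentMonomial x a / laurentMonomial x b := by
  simp only [laurentMonomial, ← prod_div_distrib, Pi.sub_apply, zpow_sub₀ (hx _)]

lemma laurentMonomial_zsmul (m : ℤ) (v : ι → ℤ) :
    laurentMonomial x (m • v) = laurentMonomial x v ^ m := by
  simp only [laurentMonomial, ← prod_zpow, Pi.smul_apply, smul_eq_mul, mul_comm m, zpow_mul]

lemma laurentMonomial_zsmul_eq_zpow (m : ℤ) (v : ι → ℤ) :
    laurentMonomial x (m • v) = laurentMonomial (fun i => x i ^ m) v := by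
  simp only [laurentMonomial, Pi.smul_apply, smul_eq_mul, zpow_mul]

lemma laurentMonomial_sum (hx : ∀ i, x i ≠ 0) {κ : Type*} (s : Finset κ) (v : κ → ι → ℤ) :
    laurentMonomial x (∑ t ∈ s, v t) = ∏ t ∈ s, laurentMonomial x (v t) := by
  classical
  induction s using Finset.induction_on with
  | empty => simp
  | insert t s ht ih => rw [sum_insert ht, prod_insert ht, laurentMonomial_add hx, ih]

lemma laurentMonomial_single [DecidableEq ι] (i : ι) (m : ℤ) :
    laurentMonomial x (Pi.single i m) = x i ^ m := by
  rw [laurentMonomial, prod_eq_single i (fun j _ hj => by simp [hj]) (by simp)]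
  simp

lemma laurentMonomial_eq_one_of_mem_span (hx : ∀ i, x i ≠ 0) {S : Set (ι → ℤ)}
    (hS : ∀ v ∈ S, laurentMonomial x v = 1) {v : ι → ℤ} (hv : v ∈ Submodule.span ℤ S) :
    laurentMonomial x v = 1 := by
  induction hv using Submodule.span_induction with
  | mem v hv => exact hS v hv
  | zero => exact laurentMonomial_zero
  | add a b _ _ ha hb => rw [laurentMonomial_add hx, ha, hb, one_mul]
  | smul m v _ hv => rw [laurentMonomial_zsmul, hv, one_zpow]

variable {m : Type*} [Fintype m]

lemma laurentMonomial_laurentMonomial (hx : ∀ i, x i ≠ 0) (w : m → ι → ℤ) (b : m → ℤ) :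
    laurentMonomial (fun j => laurentMonomial x (w j)) b = laurentMonomial x (∑ j, b j • w j) := by
  rw [laurentMonomial_sum hx]
  exact prod_congr rfl fun j _ => (laurentMonomial_zsmul _ _).symm

end LaurentMonomial

section Relations

variable {ι G₀ : Type*} [Fintype ι] [CommGroupWithZero G₀] {x : ι → G₀}

lemma laurentMonomial_eq_of_sum_smul_eq {V : Type*} [AddCommGroup V] {w : ι → V}
    (hx : ∀ i, x i ≠ 0)
    (hrel : ∀ b : ι → ℤ, ∑ i, b i • w i = 0 → laurentMonomial x b = 1) {a b : ι → ℤ}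
    (h : ∑ i, a i • w i = ∑ i, b i • w i) : laurentMonomial x a = laurentMonomial x b := by
  have hab := hrel (a - b) (by simp only [Pi.sub_apply, sub_smul, sum_sub_distrib, h, sub_self])
  rwa [laurentMonomial_sub hx, div_eq_one_iff_eq (laurentMonomial_ne_zero hx b)] at hab

lemma zpow_det_eq_laurentMonomial_adjugate [DecidableEq ι] {m : Type*} [Fintype m]
    [DecidableEq m] {w : ι → m → ℤ} (hx : ∀ i, x i ≠ 0)
    (hrel : ∀ b : ι → ℤ, ∑ i, b i • w i = 0 → laurentMonomial x b = 1) (e : m → ι) (i : ι) :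
    x i ^ (Matrix.of fun s => w (e s)).det =
      laurentMonomial (x ∘ e) (Matrix.vecMul (w i) (Matrix.of fun s => w (e s)).adjugate) := by
  set M : Matrix m m ℤ := Matrix.of fun s => w (e s)
  set c := Matrix.vecMul (w i) M.adjugate
  have hcomb : ∑ j, (M.det • Pi.single i 1 : ι → ℤ) j • w j =
      ∑ j, (∑ s, c s • Pi.single (e s) 1 : ι → ℤ) j • w j := by
    rw [← Fintype.linearCombination_apply ℤ w (M.det • _),
      ← Fintype.linearCombination_apply ℤ w (∑ s, _), map_smul, map_sum]
    simp only [map_smul, Fintype.linearCombination_apply_single, one_smul]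
    rw [show ∑ s, c s • w (e s) = Matrix.vecMul c M from (Matrix.vecMul_eq_sum c M).symm,
      Matrix.vecMul_vecMul, Matrix.adjugate_mul, Matrix.vecMul_smul, Matrix.vecMul_one]
  have h := laurentMonomial_eq_of_sum_smul_eq hx hrel hcomb
  rw [laurentMonomial_zsmul, laurentMonomial_single, zpow_one, laurentMonomial_sum hx] at h
  rw [h]
  exact prod_congr rfl fun s _ => by
    rw [laurentMonomial_zsmul, laurentMonomial_single, zpow_one, Function.comp_apply]

end Relations

lemma exists_odd_det_of_span_zmod_two {ι m : Type*} [Fintype m] [DecidableEq m] (w : ι → m → ℤ)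
    (hw : Submodule.span (ZMod 2) (Set.range fun i j => (w i j : ZMod 2)) = ⊤) :
    ∃ e : m → ι, Odd (Matrix.of fun s => w (e s)).det := by
  obtain ⟨κ, a, -, hspan, hli⟩ := exists_linearIndependent' (ZMod 2) fun i j => (w i j : ZMod 2)
  let f : m ≃ κ := (Pi.basisFun (ZMod 2) m).indexEquiv (.mk hli (by rw [hspan, hw]))
  refine ⟨a ∘ f, ?_⟩
  have hunit : IsUnit ((Matrix.of fun s => w (a (f s))).map (Int.cast : ℤ → ZMod 2)) :=
    Matrix.linearIndependent_rows_iff_isUnit.mp (hli.comp f f.injective)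
  rw [Matrix.isUnit_iff_isUnit_det, isUnit_iff_ne_zero] at hunit
  rw [← Int.not_even_iff_odd, ← ZMod.intCast_eq_zero_iff_even]
  exact (RingHom.map_det (Int.castRingHom (ZMod 2)) _).trans_ne hunit

lemma Real.pow_surjective_of_odd {n : ℕ} (hn : Odd n) : Function.Surjective fun r : ℝ => r ^ n := by
  intro a
  rcases le_total 0 a with ha | ha
  · exact ⟨a ^ (n⁻¹ : ℝ), Real.rpow_inv_natCast_pow ha hn.pos.ne'⟩
  · refine ⟨-(-a) ^ (n⁻¹ : ℝ), ?_⟩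
    simp only [hn.neg_pow, Real.rpow_inv_natCast_pow (neg_nonneg.mpr ha) hn.pos.ne', neg_neg]

lemma Real.zpow_bijective_of_odd {d : ℤ} (hd : Odd d) : Function.Bijective fun r : ℝ => r ^ d := by
  have hn : Odd d.natAbs := Int.natAbs_odd.mpr hd
  have hpow : Function.Bijective fun r : ℝ => r ^ d.natAbs :=
    ⟨hn.strictMono_pow.injective, Real.pow_surjective_of_odd hn⟩
  rcases Int.natAbs_eq d with h | h
  · rw [h]; simpa only [zpow_natCast] using hpow
  · rw [h]
    simp only [zpow_neg, zpow_natCast]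
    exact inv_involutive.bijective.comp hpow

lemma sum_smul_adjugate_eq {m : Type*} [Fintype m] [DecidableEq m] (M : Matrix m m ℤ) (s : m) :
    ∑ j, M s j • M.adjugate j = M.det • Pi.single s 1 := by
  rw [← Matrix.vecMul_eq_sum, ← Matrix.mul_apply_eq_vecMul, Matrix.mul_adjugate]
  funext t
  simp [Matrix.one_apply, Pi.single_apply, eq_comm]

lemma exists_laurentMonomial_rows_eq {m : Type*} [Fintype m] [DecidableEq m]
    {M : Matrix m m ℤ} (hM : Odd M.det) {u : m → ℝ} (hu : ∀ s, u s ≠ 0) :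
    ∃ x : m → ℝ, (∀ j, x j ≠ 0) ∧ ∀ s, laurentMonomial x (M s) = u s := by
  have hroot := Real.zpow_bijective_of_odd hM
  choose x hx using fun j => hroot.2 (laurentMonomial u (M.adjugate j))
  beta_reduce at hx
  have hx0 : ∀ j, x j ≠ 0 := fun j hj => laurentMonomial_ne_zero hu (M.adjugate j) <| by
    rw [← hx j, hj, zero_zpow _ (by rintro h; simp [h] at hM)]
  refine ⟨x, hx0, fun s => hroot.1 ?_⟩
  calc laurentMonomial x (M s) ^ M.det
      = laurentMonomial (fun j => x j ^ M.det) (M s) := by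
        rw [← laurentMonomial_zsmul, laurentMonomial_zsmul_eq_zpow]
    _ = laurentMonomial (fun j => laurentMonomial u (M.adjugate j)) (M s) := by simp only [hx]
    _ = laurentMonomial u (∑ j, M s j • M.adjugate j) := laurentMonomial_laurentMonomial hu _ _
    _ = u s ^ M.det := by
        rw [sum_smul_adjugate_eq, laurentMonomial_zsmul, laurentMonomial_single, zpow_one]

theorem gale_dual_image_general
    (n k : ℕ)
    (w : Fin (n + k) → (Fin n → ℤ))
    (hspan : Submodule.span (ZMod 2)
      (insert 0 (Set.range (fun i => fun j => ((w i j : ZMod 2))))) = ⊤)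
    (β : Fin k → (Fin (n + k) → ℤ))
    (hβrel : ∀ j, ∑ i, β j i • w i = 0)
    (hβspan : ∀ b : Fin (n + k) → ℤ, (∑ i, b i • w i = 0) →
      b ∈ Submodule.span ℤ (Set.range β)) :
    (fun x : Fin n → ℝ => fun i => ∏ j, x j ^ (w i j)) '' {x | ∀ j, x j ≠ 0} =
      {z : Fin (n + k) → ℝ | (∀ i, z i ≠ 0) ∧ ∀ j, (∏ i, z i ^ (β j i)) = 1} := by
  have image_relation {x : Fin n → ℝ} (hx : ∀ j, x j ≠ 0) {b : Fin (n + k) → ℤ}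
      (hb : ∑ i, b i • w i = 0) : laurentMonomial (fun i => laurentMonomial x (w i)) b = 1 := by
    rw [laurentMonomial_laurentMonomial hx, hb, laurentMonomial_zero]
  ext z
  constructor
  · rintro ⟨x, hx, rfl⟩
    exact ⟨fun i => laurentMonomial_ne_zero hx (w i), fun j => image_relation hx (hβrel j)⟩
  · rintro ⟨hz, hβ⟩
    have hrel (b) (hb : ∑ i, b i • w i = 0) : laurentMonomial z b = 1 :=
      laurentMonomial_eq_one_of_mem_span hz (by rintro _ ⟨j, rfl⟩; exact hβ j) (hβspan b hb)
    obtain ⟨e, hodd⟩ :=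
      exists_odd_det_of_span_zmod_two w (by rwa [← Submodule.span_insert_zero])
    obtain ⟨x, hx, hxe⟩ := exists_laurentMonomial_rows_eq hodd fun s => hz (e s)
    refine ⟨x, hx, funext fun i => (Real.zpow_bijective_of_odd hodd).1 ?_⟩
    have hagree : (fun i => laurentMonomial x (w i)) ∘ e = z ∘ e := funext hxe
    show laurentMonomial x (w i) ^ _ = z i ^ _
    rw [zpow_det_eq_laurentMonomial_adjugate (fun i => laurentMonomial_ne_zero hx (w i))
        (fun b => image_relation hx), hagree, zpow_det_eq_laurentMonomial_adjugate hz hrel]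

/-- **The image of `Φ_W` is cut out by the binomial equations `z^{β_j} = 1`.**
If `W = {0, w_1, …, w_{n+k}} ⊂ ℤ^n` spans `ℤ^n` mod 2 and `β_1, …, β_k` is a ℤ-basis
of the lattice of linear relations among `w_1, …, w_{n+k}`, then the image of
`Φ_W : (ℝ∖{0})^n → (ℝ∖{0})^{n+k}`, `x ↦ (x^{w_1}, …, x^{w_{n+k}})`, equals
`{z ∈ (ℝ∖{0})^{n+k} : z^{β_1} = ⋯ = z^{β_k} = 1}`. -/
theorem gale_dual_image
    (n k : ℕ) (hn : 1 ≤ n)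
    (w : Fin (n + k) → (Fin n → ℤ))
    (hspan : Submodule.span (ZMod 2)
      (insert 0 (Set.range (fun i => fun j => ((w i j : ZMod 2))))) = ⊤)
    (β : Fin k → (Fin (n + k) → ℤ))
    (hβrel : ∀ j, ∑ i, β j i • w i = 0)
    (hβindep : LinearIndependent ℤ β)
    (hβspan : ∀ b : Fin (n + k) → ℤ, (∑ i, b i • w i = 0) →
      b ∈ Submodule.span ℤ (Set.range β)) :
    (fun x : Fin n → ℝ => fun i => ∏ j, x j ^ (w i j)) '' {x | ∀ j, x j ≠ 0} =
      {z : Fin (n + k) → ℝ | (∀ i, z i ≠ 0) ∧ ∀ j, (∏ i, z i ^ (β j i)) = 1} :=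
  gale_dual_image_general n k w hspan β hβrel hβspan
end

section
/- Let n ≥ 1, k ≥ 0 be integers and let W = {w_0 = 0, w_1, …, w_{n+k}} ⊂ ℤ^n span ℤ^n mod 2. Then the map Φ_W : (ℝ∖{0})^n → (ℝ∖{0})^{n+k}, Φ_W(x) = (x^{w_1}, …, x^{w_{n+k}}), is injective. -/
/-!
Lifting a mod-2 spanning family gives an integer matrix `A` whose rows are integer combinations
of the `w_i` and with `A ≡ 1 (mod 2)`, so `d = det A` is odd; since `adj A * A = d • 1`, every
`d • e_j` is an integer combination of the `w_i`. If `x^{w_i} = y^{w_i}` for all `i`, then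
`z = x / y` satisfies `z^v = 1` for every `v` in that span, hence `z_j ^ d = 1`, and an odd power
determines a real number.
-/

open Submodule

section ModTwoSpan

open Matrix

variable {ι I : Type*} [DecidableEq ι] [Fintype I]

theorem exists_matrix_rows_mem_span_map_eq_one {w : I → ι → ℤ}
    (hw : span (ZMod 2) (Set.range fun i j => (w i j : ZMod 2)) = ⊤) :
    ∃ A : Matrix ι ι ℤ, (∀ m, A m ∈ span ℤ (Set.range w)) ∧ A.map (Int.cast : ℤ → ZMod 2) = 1 := by
  have hsingle (m : ι) : ∃ c : I → ZMod 2, ∑ i, c i • (fun j => (w i j : ZMod 2)) = Pi.single m 1 :=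
    (mem_span_range_iff_exists_fun (ZMod 2)).mp (hw ▸ mem_top)
  choose c hc using hsingle
  refine ⟨of fun m => ∑ i, (c m i).valMinAbs • w i, fun m => ?_, ?_⟩
  · exact sum_mem fun i _ => smul_mem _ _ (subset_span ⟨i, rfl⟩)
  · ext m j
    have := congrFun (hc m) j
    simp only [Finset.sum_apply, Pi.smul_apply, smul_eq_mul] at this
    simp only [map_apply, of_apply, Finset.sum_apply, Pi.smul_apply, smul_eq_mul, Int.cast_sum,
      Int.cast_mul, ZMod.coe_valMinAbs, this, one_apply, Pi.single_apply, eq_comm]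

theorem exists_odd_smul_single_mem_span [Fintype ι] {w : I → ι → ℤ}
    (hw : span (ZMod 2) (Set.range fun i j => (w i j : ZMod 2)) = ⊤) :
    ∃ d : ℤ, Odd d ∧ ∀ j, d • Pi.single j 1 ∈ span ℤ (Set.range w) := by
  obtain ⟨A, hA, hA2⟩ := exists_matrix_rows_mem_span_map_eq_one hw
  refine ⟨A.det, ?_, fun j => ?_⟩
  · rw [← ZMod.intCast_eq_one_iff_odd, Int.cast_det, hA2, det_one]
  · have hrow : A.det • Pi.single j 1 = adjugate A j ᵥ* A := by
      ext m
      rw [← mul_apply_eq_vecMul, adjugate_mul]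
      simp [one_apply, Pi.single_apply, eq_comm]
    rw [hrow, vecMul_eq_sum]
    exact sum_mem fun m _ => smul_mem _ _ (hA m)

end ModTwoSpan

section MonomialKernel

variable {ι K : Type*} [Fintype ι] [Field K]

def monomialKer (z : ι → K) (hz : ∀ j, z j ≠ 0) : Submodule ℤ (ι → ℤ) where
  carrier := {v | ∏ j, z j ^ v j = 1}
  add_mem' {a b} (ha : ∏ j, z j ^ a j = 1) (hb : ∏ j, z j ^ b j = 1) :=
    show ∏ j, z j ^ (a j + b j) = 1 by
      simp only [zpow_add₀ (hz _), Finset.prod_mul_distrib, ha, hb, mul_one]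
  zero_mem' := by simp
  smul_mem' c v (hv : ∏ j, z j ^ v j = 1) :=
    show ∏ j, z j ^ (c * v j) = 1 by
      simp only [mul_comm c, _root_.zpow_mul, Finset.prod_zpow, hv, _root_.one_zpow]

@[simp]
theorem mem_monomialKer {z : ι → K} {hz : ∀ j, z j ≠ 0} {v : ι → ℤ} :
    v ∈ monomialKer z hz ↔ ∏ j, z j ^ v j = 1 :=
  Iff.rfl

theorem prod_zpow_smul_single [DecidableEq ι] (z : ι → K) (d : ℤ) (j : ι) :
    ∏ l, z l ^ (d • Pi.single j 1 : ι → ℤ) l = z j ^ d := by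
  rw [Finset.prod_eq_single j (fun l _ hl => by simp [Pi.single_eq_of_ne hl]) (by simp)]
  simp

theorem Odd.eq_one_of_zpow_eq_one [LinearOrder K] [IsStrictOrderedRing K] {z : K} {d : ℤ}
    (hd : Odd d) (h : z ^ d = 1) : z = 1 := by
  have : z ^ d.natAbs = 1 := by
    rcases Int.natAbs_eq d with e | e <;> rw [e] at h
    · rwa [zpow_natCast] at h
    · rwa [_root_.zpow_neg, zpow_natCast, inv_eq_one] at h
  exact (Int.natAbs_odd.mpr hd).pow_injective (this.trans (one_pow _).symm)

variable [LinearOrder K] [IsStrictOrderedRing K] {I : Type*} [Fintype I] {w : I → ι → ℤ}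

theorem eq_one_of_prod_zpow_eq_one
    (hw : span (ZMod 2) (Set.range fun i j => (w i j : ZMod 2)) = ⊤)
    {z : ι → K} (hz : ∀ j, z j ≠ 0) (h : ∀ i, ∏ j, z j ^ w i j = 1) : z = 1 := by
  classical
  obtain ⟨d, hd, hmem⟩ := exists_odd_smul_single_mem_span hw
  have hker : span ℤ (Set.range w) ≤ monomialKer z hz := span_le.mpr (Set.range_subset_iff.mpr h)
  funext j
  have hzj := hker (hmem j)
  rw [mem_monomialKer, prod_zpow_smul_single] at hzj
  exact hd.eq_one_of_zpow_eq_one hzj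

theorem injOn_prod_zpow (hw : span (ZMod 2) (Set.range fun i j => (w i j : ZMod 2)) = ⊤) :
    Set.InjOn (fun (x : ι → K) i => ∏ j, x j ^ w i j) {x | ∀ j, x j ≠ 0} := by
  intro x hx y hy hxy
  have hquot (i : I) : ∏ j, (x j / y j) ^ w i j = 1 := by
    simp only [div_zpow, Finset.prod_div_distrib, congrFun hxy i]
    exact div_self (Finset.prod_ne_zero_iff.mpr fun j _ => zpow_ne_zero _ (hy j))
  funext j
  exact (div_eq_one_iff_eq (hy j)).mp
    (congrFun (eq_one_of_prod_zpow_eq_one hw (fun j => div_ne_zero (hx j) (hy j)) hquot) j)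

end MonomialKernel

theorem gale_map_injective_general
    (n k : ℕ)
    (w : Fin (n + k) → (Fin n → ℤ))
    (hspan : Submodule.span (ZMod 2)
      (insert 0 (Set.range (fun i => fun j => ((w i j : ZMod 2))))) = ⊤) :
    Set.InjOn (fun x : Fin n → ℝ => fun i => ∏ j, x j ^ (w i j))
      {x | ∀ j, x j ≠ 0} :=
  injOn_prod_zpow (by rwa [span_insert_zero] at hspan)

/-- **Injectivity of `Φ_W`.**
If `W = {0, w_1, …, w_{n+k}} ⊂ ℤ^n` spans `ℤ^n` mod 2, then the map
`Φ_W : (ℝ∖{0})^n → (ℝ∖{0})^{n+k}`, `x ↦ (x^{w_1}, …, x^{w_{n+k}})`, is injective. -/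
theorem gale_map_injective
    (n k : ℕ) (hn : 1 ≤ n)
    (w : Fin (n + k) → (Fin n → ℤ))
    (hspan : Submodule.span (ZMod 2)
      (insert 0 (Set.range (fun i => fun j => ((w i j : ZMod 2))))) = ⊤) :
    Set.InjOn (fun x : Fin n → ℝ => fun i => ∏ j, x j ^ (w i j))
      {x | ∀ j, x j ≠ 0} :=
  gale_map_injective_general n k w hspan
end

section
/- Let n ≥ 1, k ≥ 0 be integers, let W = {w_0 = 0, w_1, …, w_{n+k}} ⊂ ℤ^n span ℤ^n mod 2, and let Φ_W : (ℝ∖{0})^n → ℝ^{n+k} be the map Φ_W(x) = (x^{w_1}, …, x^{w_{n+k}}). Let Λ_1, …, Λ_n be degree-1 (affine) polynomials on ℝ^{n+k} and set f_i := Λ_i ∘ Φ_W for i = 1,…,n. Let L = {z ∈ ℝ^{n+k} : Λ_1(z) = ⋯ = Λ_n(z) = 0}, and suppose Ψ_p : ℝ^k → ℝ^{n+k}, Ψ_p(y) = (p_1(y),…,p_{n+k}(y)) with each p_i affine, is an affine isomorphism of ℝ^k onto L. Let β_1, …, β_k ∈ ℤ^{n+k} be a ℤ-basis of the lattice of linear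 relations {β ∈ ℤ^{n+k} : ∑_{i=1}^{n+k} b_i·w_i = 0}, and let M_A = {y ∈ ℝ^k : p_i(y) ≠ 0 for all i}. Then the map y ↦ Φ_W^{-1}(Ψ_p(y)) gives a bijection from the solution set {y ∈ M_A : p(y)^{β_1} = ⋯ = p(y)^{β_k} = 1} onto the solution set {x ∈ (ℝ∖{0})^n : f_1(x) = ⋯ = f_n(x) = 0}; more precisely, Φ_W restricts to a bijection from {x ∈ (ℝ∖{0})^n : f_1(x) = ⋯ = f_n(x) = 0} onto Ψ_p({y ∈ M_A : p(y)^{β_1} = ⋯ = p(y)^{β_k} = 1}). -/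
/-!
Since `W` spans `ℤ^n` mod 2, integer combinations of the `w_i` reduce mod 2 to the unit vectors;
the resulting square matrix is `≡ 1` mod 2, so multiplying by its adjugate gives an integer matrix
`B` with `B · W = d • 1` for an odd `d`. Hence `x_l ^ d` is a Laurent monomial in `Φ_W(x)`, and as
odd powers are bijective on `ℝ`, `Φ_W` is injective on the torus. Its image is the set of torus
points `z` with `z ^ r = 1` for every relation `r`: for such `z` put `x_l := (z ^ B_l) ^ (1 / d)`;
then `Φ_W(x)_i ^ d` and `z_i ^ d` differ by `z` raised to the relation `w_i B - d e_i`. These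
points are the ones with `z ^ β_j = 1`, and intersecting with `L = Ψ_p(ℝ^k)` gives the theorem.
-/

open Function

theorem Odd.zpow_injective {K : Type*} [Field K] [LinearOrder K] [IsStrictOrderedRing K]
    {d : ℤ} (hd : Odd d) : Injective (· ^ d : K → K) := by
  obtain ⟨m, rfl | rfl⟩ := Int.eq_nat_or_neg d
  · simpa only [zpow_natCast] using ((Int.odd_coe_nat m).1 hd).pow_injective (R := K)
  · simpa only [_root_.zpow_neg, zpow_natCast, comp_def] using
      inv_injective.comp (((Int.odd_coe_nat m).1 (odd_neg.1 hd)).pow_injective (R := K))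

open Filter in
theorem Real.pow_surjective_of_odd_s7 {m : ℕ} (hm : Odd m) : Surjective (· ^ m : ℝ → ℝ) := by
  have hm0 : m ≠ 0 := by rintro rfl; exact Nat.not_odd_zero hm
  refine Continuous.surjective (continuous_pow m) (tendsto_pow_atTop hm0) ?_
  have h := tendsto_neg_atTop_atBot.comp
    ((tendsto_pow_atTop (α := ℝ) hm0).comp tendsto_neg_atBot_atTop)
  exact h.congr fun x => by simp [hm.neg_pow]

theorem Real.zpow_surjective_of_odd {d : ℤ} (hd : Odd d) : Surjective (· ^ d : ℝ → ℝ) := by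
  obtain ⟨m, rfl | rfl⟩ := Int.eq_nat_or_neg d
  · simpa only [zpow_natCast] using Real.pow_surjective_of_odd_s7 ((Int.odd_coe_nat m).1 hd)
  · simpa only [zpow_neg, zpow_natCast, comp_def] using
      inv_surjective.comp (Real.pow_surjective_of_odd_s7 ((Int.odd_coe_nat m).1 (odd_neg.1 hd)))

namespace GaleDuality

open Finset Set
open scoped Matrix

section LaurentMonomial

variable {K ι : Type*} [CommGroupWithZero K] [Fintype ι]

def laurentMonomial (z : ι → K) (c : ι → ℤ) : K := ∏ i, z i ^ c i

@[simp]
theorem laurentMonomial_zero (z : ι → K) : laurentMonomial z 0 = 1 := by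
  simp [laurentMonomial]

theorem laurentMonomial_single [DecidableEq ι] (z : ι → K) (i : ι) (d : ℤ) :
    laurentMonomial z (Pi.single i d) = z i ^ d := by
  rw [laurentMonomial, Fintype.prod_eq_single i fun j hj => by simp [hj]]
  simp

theorem laurentMonomial_neg (z : ι → K) (c : ι → ℤ) :
    laurentMonomial z (-c) = (laurentMonomial z c)⁻¹ := by
  simp [laurentMonomial, zpow_neg]

theorem laurentMonomial_zpow (z : ι → K) (c : ι → ℤ) (d : ℤ) :
    laurentMonomial (fun i => z i ^ d) c = laurentMonomial z c ^ d := by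
  simp only [laurentMonomial, ← Finset.prod_zpow, ← zpow_mul, mul_comm]

theorem laurentMonomial_zsmul (z : ι → K) (m : ℤ) (c : ι → ℤ) :
    laurentMonomial z (m • c) = laurentMonomial z c ^ m := by
  rw [← laurentMonomial_zpow]
  simp only [laurentMonomial, Pi.smul_apply, smul_eq_mul, zpow_mul]

variable {z : ι → K}

theorem laurentMonomial_ne_zero (hz : ∀ i, z i ≠ 0) (c : ι → ℤ) : laurentMonomial z c ≠ 0 :=
  prod_ne_zero_iff.2 fun i _ => zpow_ne_zero _ (hz i)

theorem laurentMonomial_add (hz : ∀ i, z i ≠ 0) (a b : ι → ℤ) :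
    laurentMonomial z (a + b) = laurentMonomial z a * laurentMonomial z b := by
  simp only [laurentMonomial, Pi.add_apply, zpow_add₀ (hz _), prod_mul_distrib]

theorem laurentMonomial_eq_of_sub_eq_one (hz : ∀ i, z i ≠ 0) {a b : ι → ℤ}
    (h : laurentMonomial z (a - b) = 1) :
    laurentMonomial z a = laurentMonomial z b := by
  rwa [sub_eq_add_neg, laurentMonomial_add hz, laurentMonomial_neg,
    mul_inv_eq_one₀ (laurentMonomial_ne_zero hz b)] at h

theorem laurentMonomial_sum (hz : ∀ i, z i ≠ 0) {κ : Type*} (s : Finset κ) (v : κ → ι → ℤ) :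
    laurentMonomial z (∑ j ∈ s, v j) = ∏ j ∈ s, laurentMonomial z (v j) := by
  classical
  induction s using Finset.induction_on with
  | empty => simp
  | insert j s hj ih => rw [sum_insert hj, prod_insert hj, laurentMonomial_add hz, ih]

theorem laurentMonomial_vecMul (hz : ∀ i, z i ≠ 0) {κ : Type*} [Fintype κ] (b : κ → ℤ)
    (A : Matrix κ ι ℤ) :
    laurentMonomial z (b ᵥ* A) = laurentMonomial (fun j => laurentMonomial z (A j)) b := by
  simp only [Matrix.vecMul_eq_sum, laurentMonomial_sum hz, laurentMonomial_zsmul]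
  rfl

theorem laurentMonomial_eq_one_of_mem_span (hz : ∀ i, z i ≠ 0) {κ : Type*} {β : κ → ι → ℤ}
    (hβ : ∀ j, laurentMonomial z (β j) = 1) {r : ι → ℤ} (hr : r ∈ Submodule.span ℤ (range β)) :
    laurentMonomial z r = 1 := by
  induction hr using Submodule.span_induction with
  | mem c hc => obtain ⟨j, rfl⟩ := hc; exact hβ j
  | zero => exact laurentMonomial_zero z
  | add a b _ _ ha hb => rw [laurentMonomial_add hz, ha, hb, one_mul]
  | smul m a _ ha => rw [laurentMonomial_zsmul, ha, one_zpow]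

end LaurentMonomial

section MonomialMap

variable {K ι σ : Type*} [CommGroupWithZero K] [Fintype ι] {w : ι → σ → ℤ}

def relationLocus (w : ι → σ → ℤ) : Set (ι → K) :=
  {z | (∀ i, z i ≠ 0) ∧ ∀ r, r ᵥ* Matrix.of w = 0 → laurentMonomial z r = 1}

theorem relationLocus_eq_of_span_eq {κ : Type*} {β : κ → ι → ℤ}
    (hβ : ∀ j, ∑ i, β j i • w i = 0)
    (hspan : ∀ r : ι → ℤ, ∑ i, r i • w i = 0 → r ∈ Submodule.span ℤ (range β)) :
    relationLocus w = {z : ι → K | (∀ i, z i ≠ 0) ∧ ∀ j, laurentMonomial z (β j) = 1} := by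
  have hvecMul (r : ι → ℤ) : r ᵥ* Matrix.of w = ∑ i, r i • w i := Matrix.vecMul_eq_sum r _
  ext z
  refine and_congr_right fun hz => ⟨fun h j => h _ (by rw [hvecMul, hβ]), fun h r hr => ?_⟩
  exact laurentMonomial_eq_one_of_mem_span hz h (hspan r (by rwa [← hvecMul]))

variable [Fintype σ]

def monomialMap (w : ι → σ → ℤ) (x : σ → K) : ι → K := fun i => laurentMonomial x (w i)

theorem laurentMonomial_monomialMap {x : σ → K} (hx : ∀ l, x l ≠ 0) (b : ι → ℤ) :
    laurentMonomial (monomialMap w x) b = laurentMonomial x (b ᵥ* Matrix.of w) :=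
  (laurentMonomial_vecMul hx b (Matrix.of w)).symm

theorem mapsTo_monomialMap :
    MapsTo (monomialMap w) {x : σ → K | ∀ l, x l ≠ 0} (relationLocus w) :=
  fun x hx => ⟨fun i => laurentMonomial_ne_zero hx (w i), fun r hr => by
    rw [laurentMonomial_monomialMap hx, hr, laurentMonomial_zero]⟩

variable [DecidableEq σ] {d : ℤ} {B : Matrix σ ι ℤ}

theorem zpow_eq_laurentMonomial_monomialMap (hB : B * Matrix.of w = d • 1) {x : σ → K}
    (hx : ∀ l, x l ≠ 0) (l : σ) : x l ^ d = laurentMonomial (monomialMap w x) (B l) := by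
  have hrow : B l ᵥ* Matrix.of w = Pi.single l d := by
    rw [show B l ᵥ* Matrix.of w = (B * Matrix.of w) l from rfl, hB]
    ext m
    simp [Matrix.one_apply, Pi.single_apply, eq_comm]
  rw [laurentMonomial_monomialMap hx, hrow, laurentMonomial_single]

theorem injOn_monomialMap (hinj : Injective (· ^ d : K → K)) (hB : B * Matrix.of w = d • 1) :
    InjOn (monomialMap w) {x : σ → K | ∀ l, x l ≠ 0} := fun x hx x' hx' h =>
  funext fun l => hinj <| by
    simp only [zpow_eq_laurentMonomial_monomialMap hB hx,
      zpow_eq_laurentMonomial_monomialMap hB hx', h]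

theorem surjOn_monomialMap (hinj : Injective (· ^ d : K → K)) (hsurj : Surjective (· ^ d : K → K))
    (hB : B * Matrix.of w = d • 1) :
    SurjOn (monomialMap w) {x : σ → K | ∀ l, x l ≠ 0} (relationLocus w) := by
  classical
  rintro z ⟨hz, hrel⟩
  have hd : d ≠ 0 := by rintro rfl; exact zero_ne_one (hinj (by simp))
  choose x hx using fun l => hsurj (laurentMonomial z (B l))
  have hx0 : ∀ l, x l ≠ 0 := fun l h0 =>
    laurentMonomial_ne_zero hz (B l) (by rw [← hx l, h0]; exact zero_zpow d hd)
  refine ⟨x, hx0, funext fun i => hinj ?_⟩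
  have hwi : (w i ᵥ* B - Pi.single i d) ᵥ* Matrix.of w = 0 := by
    rw [Matrix.sub_vecMul, Matrix.vecMul_vecMul, hB, Matrix.vecMul_smul, Matrix.vecMul_one,
      Matrix.single_vecMul]
    exact sub_self _
  calc monomialMap w x i ^ d = laurentMonomial (fun l => x l ^ d) (w i) :=
        (laurentMonomial_zpow x (w i) d).symm
    _ = laurentMonomial (fun l => laurentMonomial z (B l)) (w i) := by simp only [hx]
    _ = laurentMonomial z (w i ᵥ* B) := (laurentMonomial_vecMul hz (w i) B).symm
    _ = laurentMonomial z (Pi.single i d) := laurentMonomial_eq_of_sub_eq_one hz (hrel _ hwi)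
    _ = z i ^ d := laurentMonomial_single z i d

theorem bijOn_monomialMap (hinj : Injective (· ^ d : K → K)) (hsurj : Surjective (· ^ d : K → K))
    (hB : B * Matrix.of w = d • 1) :
    BijOn (monomialMap w) {x : σ → K | ∀ l, x l ≠ 0} (relationLocus w) :=
  ⟨mapsTo_monomialMap, injOn_monomialMap hinj hB, surjOn_monomialMap hinj hsurj hB⟩

end MonomialMap

section OddCombination

variable {ι σ : Type*} [Fintype ι] [DecidableEq σ]

theorem exists_mul_map_intCast_eq_one (w : ι → σ → ℤ)
    (hw : Submodule.span (ZMod 2) (range fun i j => (w i j : ZMod 2)) = ⊤) :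
    ∃ C : Matrix σ ι ℤ, (C * Matrix.of w).map (Int.cast : ℤ → ZMod 2) = 1 := by
  have hmem (l : σ) : ∃ c : ι → ZMod 2, ∑ i, c i • (fun j => (w i j : ZMod 2)) = Pi.single l 1 :=
    (Submodule.mem_span_range_iff_exists_fun _).1 (hw ▸ Submodule.mem_top)
  choose c hc using hmem
  refine ⟨Matrix.of fun l i => ((c l i).cast : ℤ), ?_⟩
  ext l m
  simpa [Matrix.mul_apply, Matrix.one_apply, Pi.single_apply, eq_comm] using congrFun (hc l) m

theorem odd_det_of_map_intCast_eq_one [Fintype σ] {M : Matrix σ σ ℤ}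
    (hM : M.map (Int.cast : ℤ → ZMod 2) = 1) : Odd M.det := by
  rw [← ZMod.intCast_eq_one_iff_odd, Int.cast_det, hM, Matrix.det_one]

theorem exists_odd_mul_eq_smul_one [Fintype σ] (w : ι → σ → ℤ)
    (hw : Submodule.span (ZMod 2) (range fun i j => (w i j : ZMod 2)) = ⊤) :
    ∃ d : ℤ, Odd d ∧ ∃ B : Matrix σ ι ℤ, B * Matrix.of w = d • 1 := by
  obtain ⟨C, hC⟩ := exists_mul_map_intCast_eq_one w hw
  exact ⟨_, odd_det_of_map_intCast_eq_one hC, (C * Matrix.of w).adjugate * C,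
    by rw [Matrix.mul_assoc, Matrix.adjugate_mul]⟩

end OddCombination

end GaleDuality

open GaleDuality Set in
theorem gale_duality_bijection_general
    (n k : ℕ)
    (w : Fin (n + k) → (Fin n → ℤ))
    (hspan : Submodule.span (ZMod 2)
      (insert 0 (Set.range (fun i => fun j => ((w i j : ZMod 2))))) = ⊤)
    (Φ : (Fin n → ℝ) → (Fin (n + k) → ℝ))
    (hΦ : ∀ x i, Φ x i = ∏ j, x j ^ (w i j))
    (Λ : Fin n → (Fin (n + k) → ℝ) → ℝ)
    (f : Fin n → (Fin n → ℝ) → ℝ)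
    (hf : ∀ i x, f i x = Λ i (Φ x))
    (p : Fin (n + k) → (Fin k → ℝ) → ℝ)
    (Ψ : (Fin k → ℝ) → (Fin (n + k) → ℝ))
    (hΨ : ∀ y i, Ψ y i = p i y)
    (hΨbij : Set.BijOn Ψ Set.univ {z : Fin (n + k) → ℝ | ∀ i, Λ i z = 0})
    (β : Fin k → (Fin (n + k) → ℤ))
    (hβrel : ∀ j, ∑ i, β j i • w i = 0)
    (hβspan : ∀ b : Fin (n + k) → ℤ, (∑ i, b i • w i = 0) →
      b ∈ Submodule.span ℤ (Set.range β)) :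
    Set.BijOn Φ
      {x : Fin n → ℝ | (∀ j, x j ≠ 0) ∧ ∀ i, f i x = 0}
      (Ψ '' {y : Fin k → ℝ | (∀ i, p i y ≠ 0) ∧
        ∀ j, (∏ i, p i y ^ (β j i)) = 1}) := by
  obtain rfl : Φ = monomialMap w := funext fun x => funext (hΦ x)
  obtain rfl : Ψ = fun y i => p i y := funext fun y => funext (hΨ y)
  rw [Submodule.span_insert_zero] at hspan
  obtain ⟨d, hd, B, hB⟩ := exists_odd_mul_eq_smul_one w hspan
  have hbij := bijOn_monomialMap hd.zpow_injective (Real.zpow_surjective_of_odd hd) hB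
  set L := {z : Fin (n + k) → ℝ | ∀ i, Λ i z = 0}
  convert hbij.inter_mapsTo (mapsTo_preimage _ L) inter_subset_right using 1
  · ext x
    simp [hf, L]
  · rw [relationLocus_eq_of_span_eq hβrel hβspan, ← hΨbij.image_eq, image_univ,
      ← image_preimage_eq_inter_range]
    rfl

/-- **Gale duality for polynomial systems.**
Suppose `W = {0, w_1, …, w_{n+k}} ⊂ ℤ^n` spans `ℤ^n` mod 2, with
`Φ_W(x) = (x^{w_1}, …, x^{w_{n+k}})`. Let `Λ_1, …, Λ_n` be affine (degree-1) polynomials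
on `ℝ^{n+k}`, set `f_i := Λ_i ∘ Φ_W`, let `L` be the common zero set of the `Λ_i`, and
suppose `Ψ_p(y) = (p_1(y), …, p_{n+k}(y))` (with each `p_i` affine) is a bijection of
`ℝ^k` onto `L`.  If `β_1, …, β_k` is a ℤ-basis of the lattice of linear relations among
`w_1, …, w_{n+k}`, then `Φ_W` restricts to a bijection from the solution set
`{x ∈ (ℝ∖{0})^n : f_1(x) = ⋯ = f_n(x) = 0}` onto
`Ψ_p({y ∈ M_A : p(y)^{β_1} = ⋯ = p(y)^{β_k} = 1})`. -/
theorem gale_duality_bijection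
    (n k : ℕ) (hn : 1 ≤ n)
    (w : Fin (n + k) → (Fin n → ℤ))
    (hspan : Submodule.span (ZMod 2)
      (insert 0 (Set.range (fun i => fun j => ((w i j : ZMod 2))))) = ⊤)
    (Φ : (Fin n → ℝ) → (Fin (n + k) → ℝ))
    (hΦ : ∀ x i, Φ x i = ∏ j, x j ^ (w i j))
    (Λ : Fin n → (Fin (n + k) → ℝ) → ℝ)
    (Λ₀ : Fin n → ℝ) (Λlin : Fin n → (Fin (n + k) → ℝ))
    (hΛ : ∀ i z, Λ i z = Λ₀ i + ∑ m, Λlin i m * z m)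
    (f : Fin n → (Fin n → ℝ) → ℝ)
    (hf : ∀ i x, f i x = Λ i (Φ x))
    (p : Fin (n + k) → (Fin k → ℝ) → ℝ)
    (p₀ : Fin (n + k) → ℝ) (pa : Fin (n + k) → (Fin k → ℝ))
    (hp : ∀ i y, p i y = p₀ i + ∑ j, pa i j * y j)
    (Ψ : (Fin k → ℝ) → (Fin (n + k) → ℝ))
    (hΨ : ∀ y i, Ψ y i = p i y)
    (hΨbij : Set.BijOn Ψ Set.univ {z : Fin (n + k) → ℝ | ∀ i, Λ i z = 0})
    (β : Fin k → (Fin (n + k) → ℤ))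
    (hβrel : ∀ j, ∑ i, β j i • w i = 0)
    (hβindep : LinearIndependent ℤ β)
    (hβspan : ∀ b : Fin (n + k) → ℤ, (∑ i, b i • w i = 0) →
      b ∈ Submodule.span ℤ (Set.range β)) :
    Set.BijOn Φ
      {x : Fin n → ℝ | (∀ j, x j ≠ 0) ∧ ∀ i, f i x = 0}
      (Ψ '' {y : Fin k → ℝ | (∀ i, p i y ≠ 0) ∧
        ∀ j, (∏ i, p i y ^ (β j i)) = 1}) :=
  gale_duality_bijection_general n k w hspan Φ hΦ Λ f hf p Ψ hΨ hΨbij β hβrel hβspan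
end

section
/- Let A be a finite collection of affine hyperplanes in ℝ^k in general position, meaning: for every subcollection of m ≤ k hyperplanes of A, their intersection is an affine subspace of dimension k − m, and no k+1 hyperplanes of A have a common point. Let x ∈ ℝ^k be a point lying on exactly j hyperplanes of A (0 ≤ j ≤ k). Then exactly 2^j connected components (chambers) of the complement ℝ^k ∖ ⋃A contain x in their closure. -/
/-!
The hyperplanes through `x` have linearly independent normals: by general position their
common solution set has codimension `j`, so the `j` linear forms jointly map onto `ℝ^j`.
In a small ball around `x` that meets no other hyperplane, the complement therefore splits
into the `2^j` convex sign orthants `{±φᵢ > ±cᵢ}`, each nonempty with `x` in its closure.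
A chamber with `x` in its closure meets the ball, hence contains exactly one of these
orthants, and different orthants lie in different chambers because a chamber cannot
cross a hyperplane.
-/

open Set Filter Topology Metric

theorem IsPreconnected.lt_iff_lt_of_forall_ne {X α : Type*} [TopologicalSpace X]
    [LinearOrder α] [TopologicalSpace α] [OrderClosedTopology α] {s : Set X}
    (hs : IsPreconnected s) {f : X → α} (hf : ContinuousOn f s) {c : α}
    (hne : ∀ y ∈ s, f y ≠ c) {y z : X} (hy : y ∈ s) (hz : z ∈ s) : c < f y ↔ c < f z := by
  suffices key : ∀ y ∈ s, ∀ z ∈ s, c < f y → c < f z from ⟨key y hy z hz, key z hz y hy⟩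
  intro y hy z hz hcy
  by_contra! hzc
  obtain ⟨w, hw, hwc⟩ := hs.intermediate_value₂ hz hy hf continuousOn_const hzc hcy.le
  exact hne w hw hwc

theorem AffineSubspace.direction_eq_ker_of_coe_eq_preimage {k V W : Type*} [Ring k]
    [AddCommGroup V] [Module k V] [AddCommGroup W] [Module k W] {S : AffineSubspace k V}
    {L : V →ₗ[k] W} {b : W} (hS : (S : Set V) = L ⁻¹' {b}) (hne : (S : Set V).Nonempty) :
    S.direction = LinearMap.ker L := by
  obtain ⟨x, hx⟩ := hne
  have hLx : L x = b := by rw [hS] at hx; exact hx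
  ext v
  rw [← S.vadd_mem_iff_mem_direction v hx, ← SetLike.mem_coe, hS]
  simp [hLx]

theorem exists_forall_apply_eq_of_finrank_direction {ι K E : Type*} [Field K] [AddCommGroup E]
    [Module K E] [FiniteDimensional K E] (φ : ι → E →ₗ[K] K) (c : ι → K) (s : Finset ι)
    {S : AffineSubspace K E} (hS : (S : Set E) = {y | ∀ i ∈ s, φ i y = c i})
    (hne : (S : Set E).Nonempty)
    (hdim : Module.finrank K S.direction + s.card = Module.finrank K E)
    (b : ι → K) : ∃ v, ∀ i ∈ s, φ i v = b i := by
  set L : E →ₗ[K] s → K := LinearMap.pi fun i => φ i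
  have hker : S.direction = LinearMap.ker L := by
    refine AffineSubspace.direction_eq_ker_of_coe_eq_preimage (b := fun i => c i) ?_ hne
    rw [hS]
    ext y
    simp [L, funext_iff]
  have hrange : LinearMap.range L = ⊤ := by
    apply Submodule.eq_top_of_finrank_eq
    have hrank := L.finrank_range_add_finrank_ker
    rw [← hker] at hrank
    simp only [Module.finrank_fintype_fun_eq_card, Fintype.card_coe]
    omega
  obtain ⟨v, hv⟩ := LinearMap.range_eq_top.mp hrange fun i => b i
  exact ⟨v, fun i hi => congrFun hv ⟨i, hi⟩⟩

namespace HyperplaneArrangement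

variable {E ι : Type*} [NormedAddCommGroup E] [NormedSpace ℝ E]
  (φ : ι → E →L[ℝ] ℝ) (c : ι → ℝ)

def complement : Set E := {y | ∀ i, φ i y ≠ c i}

def orthant (J : Set ι) (ε : J → Bool) : Set E :=
  {y | ∀ i : J, if ε i then c i < φ i y else φ i y < c i}

def chambersAt (x : E) : Set (Set E) :=
  {C | (∃ y ∈ complement φ c, C = connectedComponentIn (complement φ c) y) ∧ x ∈ closure C}

noncomputable def side (J : Set ι) (y : E) : J → Bool := fun i => decide (c i < φ i y)

variable {φ c}

theorem convex_orthant (J : Set ι) (ε : J → Bool) : Convex ℝ (orthant φ c J ε) := by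
  simp only [orthant, ofPred_forall]
  refine convex_iInter fun i : J => ?_
  cases ε i
  · exact convex_halfSpace_lt (φ i).isLinear _
  · exact convex_halfSpace_gt (φ i).isLinear _

theorem side_eq_of_mem_orthant {J : Set ι} {ε : J → Bool} {y : E} (hy : y ∈ orthant φ c J ε) :
    side φ c J y = ε := by
  funext i
  have := hy i
  cases h : ε i <;> simp only [h, side, if_true, if_false, Bool.false_eq_true] at this ⊢
  · simpa using this.le
  · simpa using this

theorem mem_orthant_side {J : Set ι} {y : E} (hy : y ∈ complement φ c) :
    y ∈ orthant φ c J (side φ c J y) := by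
  intro i
  by_cases h : c i < φ i y
  · simp [side, h]
  · simpa [side, h] using lt_of_le_of_ne (not_lt.mp h) (hy i)

theorem side_eq_of_mem_connectedComponentIn (J : Set ι) {y z : E}
    (hz : z ∈ connectedComponentIn (complement φ c) y) :
    side φ c J z = side φ c J y := by
  have hy : y ∈ connectedComponentIn (complement φ c) y :=
    mem_connectedComponentIn (connectedComponentIn_nonempty_iff.mp ⟨z, hz⟩)
  funext i
  simp only [side, decide_eq_decide]
  exact isPreconnected_connectedComponentIn.lt_iff_lt_of_forall_ne (φ i).continuous.continuousOn
    (fun w hw => (connectedComponentIn_subset _ _ hw : w ∈ complement φ c) i) hz hy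

theorem inter_orthant_subset_complement {J : Set ι} {U : Set E}
    (hU : ∀ y ∈ U, ∀ i ∉ J, φ i y ≠ c i) (ε : J → Bool) :
    U ∩ orthant φ c J ε ⊆ complement φ c := by
  rintro y ⟨hyU, hyε⟩ i
  by_cases hi : i ∈ J
  · have := hyε ⟨i, hi⟩
    split_ifs at this
    exacts [this.ne', this.ne]
  · exact hU y hyU i hi

theorem exists_ball_forall_ne [Finite ι] (x : E) :
    ∃ r > 0, ∀ y ∈ ball x r, ∀ i, φ i x ≠ c i → φ i y ≠ c i := by
  refine eventually_nhds_iff_ball.mp (eventually_all.mpr fun i => ?_)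
  by_cases hi : φ i x = c i
  · exact Eventually.of_forall fun _ h => absurd hi h
  · exact ((φ i).continuous.continuousAt.eventually_ne hi).mono fun _ h _ => h

theorem mem_closure_inter_orthant {x : E} {J : Set ι} (hJ : ∀ i ∈ J, φ i x = c i) {ε : J → Bool}
    {v : E} (hv : ∀ i : J, φ i v = if ε i then 1 else -1) {U : Set E} (hU : U ∈ 𝓝 x) :
    x ∈ closure (U ∩ orthant φ c J ε) := by
  have hlim : Tendsto (fun s : ℝ => x + s • v) (𝓝[>] 0) (𝓝 x) :=
    ((continuous_const.add (continuous_id.smul continuous_const)).tendsto' 0 x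
      (by simp)).mono_left nhdsWithin_le_nhds
  refine mem_closure_of_tendsto hlim ((hlim.eventually hU).and ?_)
  filter_upwards [self_mem_nhdsWithin] with s (hs : 0 < s) i
  have hφ : φ i (x + s • v) = c i + s * φ i v := by simp [hJ i i.2]
  rw [hφ, hv i]
  cases ε i <;> simp [hs]


theorem exists_injective_range_eq_chambersAt [Finite ι] (x : E)
    (hsurj : ∀ b : ι → ℝ, ∃ v : E, ∀ i, φ i x = c i → φ i v = b i) :
    ∃ g : ({i | φ i x = c i} → Bool) → Set E,
      Function.Injective g ∧ range g = chambersAt φ c x := by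
  set Ω := complement φ c
  set J : Set ι := {i | φ i x = c i}
  obtain ⟨r, hr, hball⟩ := exists_ball_forall_ne (φ := φ) (c := c) x
  set U : (J → Bool) → Set E := fun ε => ball x r ∩ orthant φ c J ε
  have hUΩ : ∀ ε, U ε ⊆ Ω := inter_orthant_subset_complement fun y hy i hi => hball y hy i hi
  have hxU : ∀ ε, x ∈ closure (U ε) := by
    intro ε
    obtain ⟨v, hv⟩ := hsurj fun i => if h : i ∈ J then (if ε ⟨i, h⟩ then 1 else -1) else 0
    exact mem_closure_inter_orthant (fun i hi => hi) (fun i => by simpa using hv i i.2)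
      (ball_mem_nhds x hr)
  choose q hq using fun ε => closure_nonempty_iff.mp ⟨x, hxU ε⟩
  set g : (J → Bool) → Set E := fun ε => connectedComponentIn Ω (q ε)
  have hUg : ∀ ε, U ε ⊆ g ε := fun ε =>
    ((convex_ball x r).inter (convex_orthant J ε)).isPreconnected.subset_connectedComponentIn
      (hq ε) (hUΩ ε)
  refine ⟨g, fun ε ε' h => ?_, ?_⟩
  · rw [← side_eq_of_mem_orthant (hq ε).2, ← side_eq_of_mem_orthant (hq ε').2]
    refine side_eq_of_mem_connectedComponentIn J ?_
    show q ε ∈ g ε'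
    exact h ▸ hUg ε (hq ε)
  ext C
  constructor
  · rintro ⟨ε, rfl⟩
    exact ⟨⟨q ε, hUΩ ε (hq ε), rfl⟩, closure_mono (hUg ε) (hxU ε)⟩
  · rintro ⟨⟨y, -, rfl⟩, hxC⟩
    obtain ⟨z, hzC, hzx⟩ := Metric.mem_closure_iff.mp hxC r hr
    have hzU : z ∈ U (side φ c J z) :=
      ⟨mem_ball_comm.mp hzx, mem_orthant_side (connectedComponentIn_subset _ _ hzC)⟩
    exact ⟨side φ c J z,
      (connectedComponentIn_eq (hUg _ hzU)).trans (connectedComponentIn_eq hzC).symm⟩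

theorem chambersAt_finite_and_ncard_eq [Finite ι] (x : E)
    (hsurj : ∀ b : ι → ℝ, ∃ v : E, ∀ i, φ i x = c i → φ i v = b i) :
    (chambersAt φ c x).Finite ∧ (chambersAt φ c x).ncard = 2 ^ {i | φ i x = c i}.ncard := by
  obtain ⟨g, hinj, hrange⟩ := exists_injective_range_eq_chambersAt x hsurj
  rw [← hrange, ncard_range_of_injective hinj, Nat.card_fun, Nat.card_eq_fintype_card (α := Bool),
    Fintype.card_bool, Nat.card_coe_set_eq]
  exact ⟨finite_range g, rfl⟩

end HyperplaneArrangement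

open HyperplaneArrangement in
theorem chambers_at_point_of_general_position_general
    (k N j : ℕ)
    (a : Fin N → (Fin k → ℝ)) (c : Fin N → ℝ)
    (hgen : ∀ s : Finset (Fin N), s.card ≤ k →
      ∃ S : AffineSubspace ℝ (Fin k → ℝ),
        (S : Set (Fin k → ℝ)) = {y | ∀ i ∈ s, (∑ m, a i m * y m) = c i} ∧
        (S : Set (Fin k → ℝ)).Nonempty ∧
        Module.finrank ℝ S.direction = k - s.card)
    (x : Fin k → ℝ) (hjk : j ≤ k)
    (hx : {i : Fin N | (∑ m, a i m * x m) = c i}.ncard = j) :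
    {C : Set (Fin k → ℝ) |
        (∃ y ∈ {y : Fin k → ℝ | ∀ i, (∑ m, a i m * y m) ≠ c i},
          C = connectedComponentIn {y : Fin k → ℝ | ∀ i, (∑ m, a i m * y m) ≠ c i} y) ∧
        x ∈ closure C}.Finite ∧
      {C : Set (Fin k → ℝ) |
        (∃ y ∈ {y : Fin k → ℝ | ∀ i, (∑ m, a i m * y m) ≠ c i},
          C = connectedComponentIn {y : Fin k → ℝ | ∀ i, (∑ m, a i m * y m) ≠ c i} y) ∧
        x ∈ closure C}.ncard = 2 ^ j := by
  let φ : Fin N → (Fin k → ℝ) →L[ℝ] ℝ :=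
    fun i => LinearMap.toContinuousLinearMap (dotProductBilin ℝ ℝ (a i))
  have hsurj : ∀ b : Fin N → ℝ, ∃ v, ∀ i, φ i x = c i → φ i v = b i := by
    intro b
    set s := Finset.univ.filter fun i => φ i x = c i
    have hs : s.card = j := by rw [← hx, ← Set.ncard_coe_finset, Finset.coe_filter_univ]; rfl
    obtain ⟨S, hS, hne, hdim⟩ := hgen s (hs ▸ hjk)
    obtain ⟨v, hv⟩ := exists_forall_apply_eq_of_finrank_direction (fun i => (φ i : _ →ₗ[ℝ] ℝ))
      c s hS hne (by simp only [hdim, Module.finrank_fin_fun]; omega) b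
    exact ⟨v, fun i hi => hv i (by simp [s, hi])⟩
  exact hx ▸ chambersAt_finite_and_ncard_eq x hsurj

/-- **Local chamber count for an arrangement in general position.**
Let `A` be a finite collection of `N` affine hyperplanes in `ℝ^k` in general position:
every `m ≤ k` of them meet in a (nonempty) affine subspace of dimension `k − m`, and no
`k+1` of them have a common point. If `x ∈ ℝ^k` lies on exactly `j` of the hyperplanes,
then exactly `2^j` chambers (connected components of the complement) contain `x` in
their closure. -/
theorem chambers_at_point_of_general_position
    (k N j : ℕ) (hk : 1 ≤ k)
    (a : Fin N → (Fin k → ℝ)) (c : Fin N → ℝ)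
    (ha : ∀ i, a i ≠ 0)
    (hgen : ∀ s : Finset (Fin N), s.card ≤ k →
      ∃ S : AffineSubspace ℝ (Fin k → ℝ),
        (S : Set (Fin k → ℝ)) = {y | ∀ i ∈ s, (∑ m, a i m * y m) = c i} ∧
        (S : Set (Fin k → ℝ)).Nonempty ∧
        Module.finrank ℝ S.direction = k - s.card)
    (hgen' : ∀ s : Finset (Fin N), k < s.card →
      ¬∃ y : Fin k → ℝ, ∀ i ∈ s, (∑ m, a i m * y m) = c i)
    (x : Fin k → ℝ) (hjk : j ≤ k)
    (hx : {i : Fin N | (∑ m, a i m * x m) = c i}.ncard = j) :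
    {C : Set (Fin k → ℝ) |
        (∃ y ∈ {y : Fin k → ℝ | ∀ i, (∑ m, a i m * y m) ≠ c i},
          C = connectedComponentIn {y : Fin k → ℝ | ∀ i, (∑ m, a i m * y m) ≠ c i} y) ∧
        x ∈ closure C}.Finite ∧
      {C : Set (Fin k → ℝ) |
        (∃ y ∈ {y : Fin k → ℝ | ∀ i, (∑ m, a i m * y m) ≠ c i},
          C = connectedComponentIn {y : Fin k → ℝ | ∀ i, (∑ m, a i m * y m) ≠ c i} y) ∧
        x ∈ closure C}.ncard = 2 ^ j :=
  chambers_at_point_of_general_position_general k N j a c hgen x hjk hx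
end
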